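/- arXiv:2010.06463 — 2 statements merged into one kernel-verified Lean document; each statement's English description precedes it below -/
import Mathlib

section
/- With S, ω, δ, p⁺, p⁻ as above and S' = {p⁺ : p ∈ S} ∪ {p⁻ : p ∈ S}, let R be an axis-parallel square with |R ∩ S| ≥ 2. Then the closest pair in R ∩ (S ∪ S') is attained by a pair (p, a) where p ∈ R ∩ S and a ∈ R ∩ {p⁺, p⁻}; i.e., the closest pair is never formed by two points of S, nor by two points of S' arising from different original points, nor by a point of S' together with a different point of S. -/
/-!
Distinct points of `S` are at least `δ` apart, while each point `p` is at distance
`δ ω(p)/3 < δ/3` from its shifts `p⁺, p⁻`. Two points of `S` in the square force its side to be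
at least `2δ/3`, so one of the shifts of such a point lies in the square too, and the closest pair
is less than `δ/3` apart. By the triangle inequality such a pair involves only one point `p` of
`S` and its shifts, and it is not `{p⁺, p⁻}`, since these are twice as far from each other as
from `p`.
-/

noncomputable def dE (p q : ℝ × ℝ) : ℝ := Real.sqrt ((p.1 - q.1)^2 + (p.2 - q.2)^2)

noncomputable def pplus (δ : ℝ) (ω : ℝ × ℝ → ℝ) (p : ℝ × ℝ) : ℝ × ℝ :=
  (p.1 + δ * ω p / 3, p.2)

noncomputable def pminus (δ : ℝ) (ω : ℝ × ℝ → ℝ) (p : ℝ × ℝ) : ℝ × ℝ :=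
  (p.1 - δ * ω p / 3, p.2)

def square (a b ℓ : ℝ) : Set (ℝ × ℝ) :=
  {q | a ≤ q.1 ∧ q.1 ≤ a + ℓ ∧ b ≤ q.2 ∧ q.2 ≤ b + ℓ}

def IsShift (δ : ℝ) (ω : ℝ × ℝ → ℝ) (p c : ℝ × ℝ) : Prop :=
  c = pplus δ ω p ∨ c = pminus δ ω p

theorem dE_eq_dist (p q : ℝ × ℝ) : dE p q = dist (WithLp.toLp 2 p) (WithLp.toLp 2 q) := by
  simp [dE, WithLp.prod_dist_eq_of_L2, Real.dist_eq, sq_abs]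

theorem dE_comm (p q : ℝ × ℝ) : dE p q = dE q p := by
  simp only [dE_eq_dist, dist_comm]

theorem dE_triangle (p q r : ℝ × ℝ) : dE p r ≤ dE p q + dE q r := by
  simp only [dE_eq_dist]
  exact dist_triangle _ _ _

theorem dE_pos {p q : ℝ × ℝ} (h : p ≠ q) : 0 < dE p q := by
  simpa [dE_eq_dist] using h

theorem dE_horizontal (u v w : ℝ) : dE (u, w) (v, w) = |u - v| := by
  simp [dE, Real.sqrt_sq_eq_abs]

-- The diameter is `√2 ℓ`; the cruder `3/2 ℓ` is exactly what makes the side at least `2δ/3`.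
theorem dE_le_of_mem_square {a b ℓ : ℝ} {p q : ℝ × ℝ} (hp : p ∈ square a b ℓ)
    (hq : q ∈ square a b ℓ) : dE p q ≤ 3 / 2 * ℓ := by
  obtain ⟨hp₁, hp₂, hp₃, hp₄⟩ := hp
  obtain ⟨hq₁, hq₂, hq₃, hq₄⟩ := hq
  refine Real.sqrt_le_iff.2 ⟨by linarith, ?_⟩
  nlinarith

theorem eq_of_dE_add_dE_lt {S : Set (ℝ × ℝ)} {δ : ℝ}
    (hS : ∀ p ∈ S, ∀ q ∈ S, p ≠ q → δ ≤ dE p q) {p q z : ℝ × ℝ} (hp : p ∈ S) (hq : q ∈ S)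
    (h : dE p z + dE z q < δ) : p = q := by
  by_contra hpq
  linarith [hS p hp q hq hpq, dE_triangle p z q]

theorem dE_pplus_pminus (δ : ℝ) (ω : ℝ × ℝ → ℝ) (p : ℝ × ℝ) :
    dE (pplus δ ω p) (pminus δ ω p) = 2 * |δ * ω p| / 3 := by
  refine (dE_horizontal _ _ p.2).trans ?_
  rw [add_sub_sub_cancel, ← two_mul, abs_mul, abs_div]
  norm_num
  ring

namespace IsShift

variable {δ : ℝ} {ω : ℝ × ℝ → ℝ} {p c x y : ℝ × ℝ}

theorem dE_eq (h : IsShift δ ω p c) : dE p c = |δ * ω p| / 3 := by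
  rcases h with rfl | rfl <;> refine (dE_horizontal p.1 _ p.2).trans ?_
  · rw [abs_sub_comm]; simp [abs_div]
  · simp [abs_div]

theorem dE_lt (hδ : 0 < δ) (hω : 0 < ω p ∧ ω p < 1) (h : IsShift δ ω p c) :
    dE p c < δ / 3 := by
  rw [h.dE_eq, abs_of_pos (mul_pos hδ hω.1)]
  nlinarith

theorem ne (hδω : δ * ω p ≠ 0) (h : IsShift δ ω p c) : p ≠ c := by
  rintro rfl
  have hp : dE p p = 0 := by simp [dE]
  rw [h.dE_eq] at hp
  exact (abs_pos.2 hδω).ne' (by linarith)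

theorem eq_and_eq_or_eq_and_eq (hx : IsShift δ ω p x) (hy : IsShift δ ω p y) (hxy : x ≠ y) :
    x = pplus δ ω p ∧ y = pminus δ ω p ∨ x = pminus δ ω p ∧ y = pplus δ ω p := by
  rcases hx with rfl | rfl <;> rcases hy with rfl | rfl <;> simp_all

theorem dE_self_lt (hδω : δ * ω p ≠ 0) (hx : IsShift δ ω p x) (hy : IsShift δ ω p y)
    (hxy : x ≠ y) : dE p x < dE x y := by
  have hpos : 0 < |δ * ω p| := abs_pos.2 hδω
  rcases eq_and_eq_or_eq_and_eq hx hy hxy with ⟨rfl, rfl⟩ | ⟨rfl, rfl⟩ <;>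
    simp only [dE_comm (pminus δ ω p), hx.dE_eq, dE_pplus_pminus] <;> linarith

theorem mem_square (hx : IsShift δ ω p x) (hy : IsShift δ ω p y) (hxy : x ≠ y) {a b ℓ : ℝ}
    (hxs : x ∈ square a b ℓ) (hys : y ∈ square a b ℓ) : p ∈ square a b ℓ := by
  rcases eq_and_eq_or_eq_and_eq hx hy hxy with ⟨rfl, rfl⟩ | ⟨rfl, rfl⟩ <;>
    simp only [square, pplus, pminus, Set.mem_ofPred_eq] at hxs hys ⊢ <;>
    exact ⟨by linarith, by linarith, hxs.2.2⟩

end IsShift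

theorem exists_isShift_mem_square {δ : ℝ} {ω : ℝ × ℝ → ℝ} {a b ℓ : ℝ} {p : ℝ × ℝ}
    (hp : p ∈ square a b ℓ) (h₀ : 0 ≤ δ * ω p) (hℓ : 2 * (δ * ω p / 3) ≤ ℓ) :
    ∃ c, IsShift δ ω p c ∧ c ∈ square a b ℓ := by
  obtain ⟨hp₁, hp₂, hp₃⟩ := hp
  by_cases h : p.1 + δ * ω p / 3 ≤ a + ℓ
  · exact ⟨_, Or.inl rfl, ⟨by simp only [pplus]; linarith, h, hp₃⟩⟩
  · refine ⟨_, Or.inr rfl, ⟨?_, ?_, hp₃⟩⟩ <;> simp only [pminus] <;> linarith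

theorem exists_isShift_mem_square_of_le_dE {δ : ℝ} {ω : ℝ × ℝ → ℝ} {a b ℓ : ℝ} {p q : ℝ × ℝ}
    (hδ : 0 < δ) (hω : 0 < ω p ∧ ω p < 1) (hp : p ∈ square a b ℓ) (hq : q ∈ square a b ℓ)
    (hpq : δ ≤ dE p q) : ∃ c, IsShift δ ω p c ∧ c ∈ square a b ℓ := by
  have hℓ : δ ≤ 3 / 2 * ℓ := hpq.trans (dE_le_of_mem_square hp hq)
  have hωδ : δ * ω p < δ := mul_lt_of_lt_one_right hδ hω.2
  exact exists_isShift_mem_square hp (mul_pos hδ hω.1).le (by linarith)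

open Classical in
theorem closest_pair_is_point_and_shift_general (S : Finset (ℝ × ℝ))
    (ω : ℝ × ℝ → ℝ)
    (hω : ∀ p ∈ S, 0 < ω p ∧ ω p < 1)
    (δ : ℝ)
    (hδmin : ∀ p ∈ S, ∀ q ∈ S, p ≠ q → δ ≤ dE p q)
    (hδatt : ∃ p ∈ S, ∃ q ∈ S, p ≠ q ∧ dE p q = δ)
    (S' : Set (ℝ × ℝ))
    (hS' : S' = {x | ∃ p ∈ S, x = pplus δ ω p ∨ x = pminus δ ω p})
    (a b ℓ : ℝ)
    (hcard : 2 ≤ (S.filter (fun q => q ∈ square a b ℓ)).card)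
    (x y : ℝ × ℝ) (hx : x ∈ (↑S ∪ S') ∩ square a b ℓ)
    (hy : y ∈ (↑S ∪ S') ∩ square a b ℓ) (hxy : x ≠ y)
    (hmin : ∀ u ∈ (↑S ∪ S') ∩ square a b ℓ, ∀ v ∈ (↑S ∪ S') ∩ square a b ℓ,
      u ≠ v → dE x y ≤ dE u v) :
    ∃ p ∈ S, p ∈ square a b ℓ ∧
      ∃ c, (c = pplus δ ω p ∨ c = pminus δ ω p) ∧ c ∈ square a b ℓ ∧
        ({x, y} : Set (ℝ × ℝ)) = {p, c} := by
  subst hS'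
  obtain ⟨p₁, -, q₁, -, hpq₁, hδ₁⟩ := hδatt
  have hδ : 0 < δ := hδ₁ ▸ dE_pos hpq₁
  have hδω : ∀ {p}, p ∈ S → 0 < δ * ω p := fun hp => mul_pos hδ (hω _ hp).1
  have hnear : ∀ {p c}, p ∈ S → IsShift δ ω p c → dE p c < δ / 3 :=
    fun hp hc => hc.dE_lt hδ (hω _ hp)
  have hclose : dE x y < δ / 3 := by
    obtain ⟨p₀, hp₀, q₀, hq₀, hpq₀⟩ := Finset.one_lt_card.1 hcard
    rw [Finset.mem_filter] at hp₀ hq₀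
    obtain ⟨c₀, hc₀, hc₀sq⟩ := exists_isShift_mem_square_of_le_dE hδ (hω _ hp₀.1) hp₀.2 hq₀.2
      (hδmin _ hp₀.1 _ hq₀.1 hpq₀)
    exact (hmin p₀ ⟨Or.inl hp₀.1, hp₀.2⟩ c₀ ⟨Or.inr ⟨p₀, hp₀.1, hc₀⟩, hc₀sq⟩
      (hc₀.ne (hδω hp₀.1).ne')).trans_lt (hnear hp₀.1 hc₀)
  obtain ⟨hxS | ⟨p, hp, (hpx : IsShift δ ω p x)⟩, hxsq⟩ := hx <;>
    obtain ⟨hyS | ⟨q, hq, (hqy : IsShift δ ω q y)⟩, hysq⟩ := hy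
  · linarith [hδmin x hxS y hyS hxy]
  · obtain rfl : x = q := eq_of_dE_add_dE_lt hδmin hxS hq (z := y)
      (by linarith [dE_comm q y, hnear hq hqy])
    exact ⟨x, hxS, hxsq, y, hqy, hysq, rfl⟩
  · obtain rfl : y = p := eq_of_dE_add_dE_lt hδmin hyS hp (z := x)
      (by linarith [dE_comm x y, dE_comm p x, hnear hp hpx])
    exact ⟨y, hyS, hysq, x, hpx, hxsq, Set.pair_comm x y⟩
  · obtain rfl : p = q := eq_of_dE_add_dE_lt hδmin hp hq (z := y)
      (by linarith [dE_triangle p x y, dE_comm y q, hnear hp hpx, hnear hq hqy])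
    have hpsq : p ∈ square a b ℓ := hpx.mem_square hqy hxy hxsq hysq
    exact absurd (hmin p ⟨Or.inl hp, hpsq⟩ x ⟨Or.inr ⟨p, hp, hpx⟩, hxsq⟩ (hpx.ne (hδω hp).ne'))
      (hpx.dE_self_lt (hδω hp).ne' hqy hxy).not_ge

open Classical in
theorem closest_pair_is_point_and_shift (S : Finset (ℝ × ℝ))
    (ω : ℝ × ℝ → ℝ)
    (hω : ∀ p ∈ S, 0 < ω p ∧ ω p < 1)
    (hωinj : ∀ p ∈ S, ∀ q ∈ S, p ≠ q → ω p ≠ ω q)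
    (δ : ℝ)
    (hδmin : ∀ p ∈ S, ∀ q ∈ S, p ≠ q → δ ≤ dE p q)
    (hδatt : ∃ p ∈ S, ∃ q ∈ S, p ≠ q ∧ dE p q = δ)
    (S' : Set (ℝ × ℝ))
    (hS' : S' = {x | ∃ p ∈ S, x = pplus δ ω p ∨ x = pminus δ ω p})
    (a b ℓ : ℝ)
    (hcard : 2 ≤ (S.filter (fun q => q ∈ square a b ℓ)).card)
    (x y : ℝ × ℝ) (hx : x ∈ (↑S ∪ S') ∩ square a b ℓ)
    (hy : y ∈ (↑S ∪ S') ∩ square a b ℓ) (hxy : x ≠ y)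
    (hmin : ∀ u ∈ (↑S ∪ S') ∩ square a b ℓ, ∀ v ∈ (↑S ∪ S') ∩ square a b ℓ,
      u ≠ v → dE x y ≤ dE u v) :
    ∃ p ∈ S, p ∈ square a b ℓ ∧
      ∃ c, (c = pplus δ ω p ∨ c = pminus δ ω p) ∧ c ∈ square a b ℓ ∧
        ({x, y} : Set (ℝ × ℝ)) = {p, c} :=
  closest_pair_is_point_and_shift_general S ω hω δ hδmin hδatt S' hS' a b ℓ hcard x y hx hy hxy hmin
end

section
/- With S, ω, δ, S' as above and R an axis-parallel square with |R ∩ S| ≥ 2: if p ∈ R ∩ S and a ∈ {p⁺, p⁻} are such that (p, a) attains the closest-pair distance in R ∩ (S ∪ S'), then ω(p) = min{ω(q) : q ∈ R ∩ S}. -/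
lemma dE_self (u : ℝ × ℝ) : dE u u = 0 := by
  simp [dE]

lemma dE_pos_s8 {u v : ℝ × ℝ} (h : u ≠ v) : 0 < dE u v := by
  refine Real.sqrt_pos.2 ?_
  rcases ne_or_eq u.1 v.1 with h1 | h1
  · exact add_pos_of_pos_of_nonneg (sq_pos_of_ne_zero (sub_ne_zero.2 h1)) (sq_nonneg _)
  · exact add_pos_of_nonneg_of_pos (sq_nonneg _)
      (sq_pos_of_ne_zero (sub_ne_zero.2 fun h2 => h (Prod.ext h1 h2)))

lemma dE_add_fst (q : ℝ × ℝ) (t : ℝ) : dE q (q.1 + t, q.2) = |t| := by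
  rw [dE, ← Real.sqrt_sq_eq_abs]
  congr 1
  ring

lemma dE_of_eq_pplus_or_pminus {δ : ℝ} {ω : ℝ × ℝ → ℝ} {p c : ℝ × ℝ}
    (hc : c = pplus δ ω p ∨ c = pminus δ ω p) : dE p c = |δ * ω p / 3| := by
  rcases hc with rfl | rfl
  · exact dE_add_fst p _
  · rw [← abs_neg, ← dE_add_fst p, pminus, sub_eq_add_neg]

lemma side_nonneg_of_mem_square {a b ℓ : ℝ} {u : ℝ × ℝ} (hu : u ∈ square a b ℓ) : 0 ≤ ℓ := by
  obtain ⟨h1, h2, -, -⟩ := hu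
  linarith

lemma dE_le_sqrt_two_mul_of_mem_square {a b ℓ : ℝ} {u v : ℝ × ℝ}
    (hu : u ∈ square a b ℓ) (hv : v ∈ square a b ℓ) : dE u v ≤ √2 * ℓ := by
  have hℓ := side_nonneg_of_mem_square hu
  obtain ⟨hu1, hu2, hu3, hu4⟩ := hu
  obtain ⟨hv1, hv2, hv3, hv4⟩ := hv
  have h1 : (u.1 - v.1) ^ 2 ≤ ℓ ^ 2 := sq_le_sq' (by linarith) (by linarith)
  have h2 : (u.2 - v.2) ^ 2 ≤ ℓ ^ 2 := sq_le_sq' (by linarith) (by linarith)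
  rw [← Real.sqrt_sq hℓ, ← Real.sqrt_mul zero_le_two]
  exact Real.sqrt_le_sqrt (by linarith)

lemma exists_pplus_or_pminus_mem_square {δ a b ℓ : ℝ} {ω : ℝ × ℝ → ℝ} {q : ℝ × ℝ}
    (hq : q ∈ square a b ℓ) (h0 : 0 ≤ δ * ω q) (hℓ : 2 * (δ * ω q / 3) ≤ ℓ) :
    ∃ e, (e = pplus δ ω q ∨ e = pminus δ ω q) ∧ e ∈ square a b ℓ := by
  obtain ⟨hq1, hq2, hq3, hq4⟩ := hq
  by_cases hleft : q.1 ≤ a + ℓ / 2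
  · refine ⟨pplus δ ω q, Or.inl rfl, ?_, ?_, hq3, hq4⟩ <;> simp only [pplus] <;> linarith
  · refine ⟨pminus δ ω q, Or.inr rfl, ?_, ?_, hq3, hq4⟩ <;> simp only [pminus] <;> linarith

open Classical in
theorem closest_pair_gives_min_weight_general (S : Finset (ℝ × ℝ))
    (ω : ℝ × ℝ → ℝ)
    (hω : ∀ p ∈ S, 0 < ω p ∧ ω p < 1)
    (δ : ℝ)
    (hδmin : ∀ p ∈ S, ∀ q ∈ S, p ≠ q → δ ≤ dE p q)
    (hδatt : ∃ p ∈ S, ∃ q ∈ S, p ≠ q ∧ dE p q = δ)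
    (S' : Set (ℝ × ℝ))
    (hS' : S' = {x | ∃ p ∈ S, x = pplus δ ω p ∨ x = pminus δ ω p})
    (a b ℓ : ℝ)
    (hcard : 2 ≤ (S.filter (fun q => q ∈ square a b ℓ)).card)
    (p : ℝ × ℝ)
    (c : ℝ × ℝ) (hc : c = pplus δ ω p ∨ c = pminus δ ω p)
    (hmin : ∀ u ∈ (↑S ∪ S') ∩ square a b ℓ, ∀ v ∈ (↑S ∪ S') ∩ square a b ℓ,
      u ≠ v → dE p c ≤ dE u v) :
    ∀ q ∈ S, q ∈ square a b ℓ → ω p ≤ ω q := by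
  intro q hq hqR
  by_contra! hlt
  obtain ⟨hωq, hωq1⟩ := hω q hq
  have hδ : 0 < δ := by
    obtain ⟨u, -, v, -, huv, rfl⟩ := hδatt
    exact dE_pos_s8 huv
  have hδℓ : δ ≤ √2 * ℓ := by
    obtain ⟨u, hu, v, hv, huv⟩ := Finset.one_lt_card.1 hcard
    rw [Finset.mem_filter] at hu hv
    exact (hδmin u hu.1 v hv.1 huv).trans (dE_le_sqrt_two_mul_of_mem_square hu.2 hv.2)
  have hside : 2 * (δ * ω q / 3) ≤ ℓ := by
    nlinarith [Real.sqrt_two_lt_three_halves, side_nonneg_of_mem_square hqR]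
  obtain ⟨e, he, heR⟩ := exists_pplus_or_pminus_mem_square hqR (by positivity) hside
  have hqe : dE q e = δ * ω q / 3 := by
    rw [dE_of_eq_pplus_or_pminus he, abs_of_pos (by positivity)]
  have hqne : q ≠ e := by
    rintro rfl
    rw [dE_self] at hqe
    exact (by positivity : (0 : ℝ) < δ * ω q / 3).ne hqe
  have hpq := hmin q ⟨Or.inl hq, hqR⟩ e ⟨Or.inr (hS' ▸ ⟨q, hq, he⟩), heR⟩ hqne
  have hωp : 0 < ω p := hωq.trans hlt
  rw [dE_of_eq_pplus_or_pminus hc, hqe, abs_of_pos (by positivity)] at hpq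
  linarith [mul_lt_mul_of_pos_left hlt hδ]

open Classical in
theorem closest_pair_gives_min_weight (S : Finset (ℝ × ℝ))
    (ω : ℝ × ℝ → ℝ)
    (hω : ∀ p ∈ S, 0 < ω p ∧ ω p < 1)
    (hωinj : ∀ p ∈ S, ∀ q ∈ S, p ≠ q → ω p ≠ ω q)
    (δ : ℝ)
    (hδmin : ∀ p ∈ S, ∀ q ∈ S, p ≠ q → δ ≤ dE p q)
    (hδatt : ∃ p ∈ S, ∃ q ∈ S, p ≠ q ∧ dE p q = δ)
    (S' : Set (ℝ × ℝ))
    (hS' : S' = {x | ∃ p ∈ S, x = pplus δ ω p ∨ x = pminus δ ω p})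
    (a b ℓ : ℝ)
    (hcard : 2 ≤ (S.filter (fun q => q ∈ square a b ℓ)).card)
    (p : ℝ × ℝ) (hp : p ∈ S) (hpR : p ∈ square a b ℓ)
    (c : ℝ × ℝ) (hc : c = pplus δ ω p ∨ c = pminus δ ω p)
    (hcR : c ∈ square a b ℓ)
    (hmin : ∀ u ∈ (↑S ∪ S') ∩ square a b ℓ, ∀ v ∈ (↑S ∪ S') ∩ square a b ℓ,
      u ≠ v → dE p c ≤ dE u v) :
    ∀ q ∈ S, q ∈ square a b ℓ → ω p ≤ ω q :=
  closest_pair_gives_min_weight_general S ω hω δ hδmin hδatt S' hS' a b ℓ hcard p c hc hmin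
end
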